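/- arXiv:2603.28861 — 3 statements merged into one kernel-verified Lean document; each statement's English description precedes it below -/
import Mathlib

section
/- Let q ≥ 1/2 and 0 < s < 2q be real. Then the derivative d/ds of the function s ↦ s - (3/π)·log(cosh(π(q + s/2))/cosh(π(q - s/2))) equals 1 - (3/2)tanh(π(q + s/2)) - (3/2)tanh(π(q - s/2)), which is bounded above by 1 - 3tanh(πq) ≤ 1 - 3tanh(π/2) < 0. Consequently s - (3/π)·log(cosh(π(q+s/2))/cosh(π(q-s/2))) < 0 for all 0 < s < 2q. -/
open Real

lemma tanh_mono_aux {x y : ℝ} (hxy : x ≤ y) : Real.tanh x ≤ Real.tanh y := by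
  rw [Real.tanh_eq_sinh_div_cosh, Real.tanh_eq_sinh_div_cosh,
    div_le_div_iff₀ (Real.cosh_pos _) (Real.cosh_pos _)]
  nlinarith [Real.sinh_sub x y, Real.sinh_le_sinh.2 hxy, Real.sinh_le_sinh.2 (sub_nonpos.2 hxy),
    Real.sinh_zero, Real.cosh_pos x, Real.cosh_pos y]

lemma exp_pi_gt_five : (5 : ℝ) < Real.exp π := by
  have he : (2.7 : ℝ) ≤ Real.exp 1 := by linarith [Real.exp_one_gt_d9]
  have h1 : (2.7 : ℝ) ^ 3 ≤ Real.exp 1 ^ 3 := by gcongr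
  have h2 : Real.exp 1 ^ 3 = Real.exp 3 := by
    rw [← Real.exp_nat_mul]; norm_num
  have h3 : Real.exp 3 < Real.exp π := Real.exp_lt_exp.2 Real.pi_gt_three
  nlinarith

lemma tanh_pi_half_gt : (2 : ℝ) / 3 < Real.tanh (π / 2) := by
  rw [Real.tanh_eq_sinh_div_cosh, lt_div_iff₀ (Real.cosh_pos _)]
  rw [Real.sinh_eq, Real.cosh_eq]
  have ha : (0 : ℝ) < Real.exp (π / 2) := Real.exp_pos _
  have hab : Real.exp (π / 2) * Real.exp (-(π / 2)) = 1 := by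
    rw [← Real.exp_add]; norm_num
  have h5 : (5 : ℝ) < Real.exp (π / 2) ^ 2 := by
    have : Real.exp (π / 2) ^ 2 = Real.exp π := by
      rw [sq, ← Real.exp_add]; ring_nf
    rw [this]; exact exp_pi_gt_five
  nlinarith [Real.exp_pos (-(π / 2))]

/-- For `q ≥ 1/2` and `0 ≤ s < 2q`: the derivative of
`s ↦ s - (3/π)·log(cosh(π(q+s/2))/cosh(π(q-s/2)))` equals
`1 - (3/2)tanh(π(q+s/2)) - (3/2)tanh(π(q-s/2))`, this quantity is negative, and
consequently the function itself is negative on `(0, 2q)`. -/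
theorem stmt15 (q : ℝ) (hq : 1 / 2 ≤ q) :
    (∀ s : ℝ, 0 ≤ s → s < 2 * q →
      deriv (fun t : ℝ =>
          t - (3 / π) * Real.log (Real.cosh (π * (q + t / 2)) / Real.cosh (π * (q - t / 2)))) s
        = 1 - (3 / 2) * Real.tanh (π * (q + s / 2)) - (3 / 2) * Real.tanh (π * (q - s / 2))) ∧
    (∀ s : ℝ, 0 ≤ s → s < 2 * q →
      1 - (3 / 2) * Real.tanh (π * (q + s / 2)) - (3 / 2) * Real.tanh (π * (q - s / 2)) < 0) ∧
    (∀ s : ℝ, 0 < s → s < 2 * q →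
      s - (3 / π) * Real.log (Real.cosh (π * (q + s / 2)) / Real.cosh (π * (q - s / 2))) < 0) := by
  have hpi : (0 : ℝ) < π := Real.pi_pos
  -- the derivative statement at every point
  have hderiv : ∀ s : ℝ, HasDerivAt (fun t : ℝ =>
      t - (3 / π) * Real.log (Real.cosh (π * (q + t / 2)) / Real.cosh (π * (q - t / 2)))) 
      (1 - (3 / 2) * Real.tanh (π * (q + s / 2)) - (3 / 2) * Real.tanh (π * (q - s / 2))) s := by
    intro s
    have hA : HasDerivAt (fun t : ℝ => π * (q + t / 2)) (π / 2) s := by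
      have := (((hasDerivAt_id s).div_const 2).const_add q).const_mul π
      simpa using this.congr_deriv (by ring)
    have hB : HasDerivAt (fun t : ℝ => π * (q - t / 2)) (-(π / 2)) s := by
      have := (((hasDerivAt_id s).div_const 2).const_sub q).const_mul π
      simpa using this.congr_deriv (by ring)
    have hcA : HasDerivAt (fun t : ℝ => Real.cosh (π * (q + t / 2)))
        (Real.sinh (π * (q + s / 2)) * (π / 2)) s := hA.cosh
    have hcB : HasDerivAt (fun t : ℝ => Real.cosh (π * (q - t / 2)))
        (Real.sinh (π * (q - s / 2)) * (-(π / 2))) s := hB.cosh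
    have hlA : HasDerivAt (fun t : ℝ => Real.log (Real.cosh (π * (q + t / 2))))
        (Real.sinh (π * (q + s / 2)) * (π / 2) / Real.cosh (π * (q + s / 2))) s :=
      hcA.log (Real.cosh_pos _).ne'
    have hlB : HasDerivAt (fun t : ℝ => Real.log (Real.cosh (π * (q - t / 2))))
        (Real.sinh (π * (q - s / 2)) * (-(π / 2)) / Real.cosh (π * (q - s / 2))) s :=
      hcB.log (Real.cosh_pos _).ne'
    have key : HasDerivAt (fun t : ℝ =>
        t - (3 / π) * (Real.log (Real.cosh (π * (q + t / 2))) - Real.log (Real.cosh (π * (q - t / 2)))))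
        (1 - (3 / π) * (Real.sinh (π * (q + s / 2)) * (π / 2) / Real.cosh (π * (q + s / 2)) -
          Real.sinh (π * (q - s / 2)) * (-(π / 2)) / Real.cosh (π * (q - s / 2)))) s :=
      (hasDerivAt_id s).sub (((hlA.sub hlB)).const_mul (3 / π))
    have hfun : (fun t : ℝ =>
        t - (3 / π) * Real.log (Real.cosh (π * (q + t / 2)) / Real.cosh (π * (q - t / 2)))) =
        (fun t : ℝ =>
        t - (3 / π) * (Real.log (Real.cosh (π * (q + t / 2))) - Real.log (Real.cosh (π * (q - t / 2))))) := by
      funext t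
      rw [Real.log_div (Real.cosh_pos _).ne' (Real.cosh_pos _).ne']
    rw [hfun]
    convert key using 1
    rw [Real.tanh_eq_sinh_div_cosh, Real.tanh_eq_sinh_div_cosh]
    field_simp
    ring
  -- negativity of the derivative (for 0 ≤ s ≤ 2q)
  have hneg : ∀ s : ℝ, 0 ≤ s → s ≤ 2 * q →
      1 - (3 / 2) * Real.tanh (π * (q + s / 2)) - (3 / 2) * Real.tanh (π * (q - s / 2)) < 0 := by
    intro s hs0 hs2
    have h1 : Real.tanh (π / 2) ≤ Real.tanh (π * (q + s / 2)) := by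
      apply tanh_mono_aux; nlinarith
    have h2 : (0 : ℝ) ≤ Real.tanh (π * (q - s / 2)) := by
      have := tanh_mono_aux (x := 0) (y := π * (q - s / 2)) (by nlinarith)
      simpa [Real.tanh_zero] using this
    have h3 := tanh_pi_half_gt
    nlinarith
  refine ⟨fun s _ _ => (hderiv s).deriv, fun s hs0 hs2 => hneg s hs0 hs2.le, ?_⟩
  -- strict antitonicity on [0, 2q]
  intro s hs0 hs2
  set f : ℝ → ℝ := fun t =>
    t - (3 / π) * Real.log (Real.cosh (π * (q + t / 2)) / Real.cosh (π * (q - t / 2))) with hf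
  have hcont : ContinuousOn f (Set.Icc 0 (2 * q)) :=
    fun x _ => ((hderiv x).differentiableAt.continuousAt).continuousWithinAt
  have hanti : StrictAntiOn f (Set.Icc 0 (2 * q)) := by
    apply strictAntiOn_of_deriv_neg (convex_Icc 0 (2 * q)) hcont
    intro x hx
    rw [interior_Icc] at hx
    rw [(hderiv x).deriv]
    exact hneg x hx.1.le hx.2.le
  have hf0 : f 0 = 0 := by
    have heq : (π * (q + 0 / 2)) = π * (q - 0 / 2) := by ring
    simp only [hf, heq, div_self (Real.cosh_pos _).ne', Real.log_one, mul_zero, sub_zero]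
  have := hanti (Set.mem_Icc.2 ⟨le_refl 0, by linarith⟩) (Set.mem_Icc.2 ⟨hs0.le, hs2.le⟩) hs0
  rw [hf0] at this
  exact this
end

section
/- Let q ∈ ℝ, ℓ ∈ ℕ, a = 1/2 + β/2 + iq and b = 1/2 - β/2 + iq with β² = (2ℓ+1)² - 4q². Then the function ψ(τ, ρ) = (1+τ)^{b-1}·(1+ρ)^{-a} solves the PDE ρ(ρ+1)·∂²_ρψ + (τ+1)·∂_τ∂_ρψ + ((2+2iq)ρ + 1)·∂_ρψ + (iq - ℓ(ℓ+1))·ψ = 0 on (0,∞) × (0,∞). -/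
lemma aux17 (c : ℂ) {x : ℝ} (hx : 0 < 1 + x) :
    HasDerivAt (fun y : ℝ => ((1 + y : ℝ) : ℂ) ^ c) (c * ((1 + x : ℝ) : ℂ) ^ (c - 1)) x := by
  have h0 : (1 + (x : ℂ)) ∈ Complex.slitPlane := by
    rw [Complex.mem_slitPlane_iff]
    left; simpa using hx
  have h : HasDerivAt (fun z : ℂ => (1 + z) ^ c) (c * (1 + (x : ℂ)) ^ (c - 1)) (x : ℂ) := by
    have := ((hasDerivAt_id ((x : ℝ) : ℂ)).const_add 1).cpow_const (c := c) h0
    simpa using this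
  have h2 := h.comp_ofReal
  have he : (fun y : ℝ => ((1 + y : ℝ) : ℂ) ^ c) = fun y : ℝ => (1 + (y : ℂ)) ^ c := by
    funext y; push_cast; ring_nf
  rw [he]
  convert h2 using 2
  push_cast; ring

/-- With `β² = (2ℓ+1)² - 4q²`, `a = 1/2 + β/2 + iq`, `b = 1/2 - β/2 + iq`, the function
`ψ(τ,ρ) = (1+τ)^{b-1}(1+ρ)^{-a}` solves
`ρ(ρ+1)∂²_ρψ + (τ+1)∂_τ∂_ρψ + ((2+2iq)ρ+1)∂_ρψ + (iq - ℓ(ℓ+1))ψ = 0` on `(0,∞)²`. -/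
theorem stmt17 (q : ℝ) (ℓ : ℕ) (β : ℂ)
    (hβ : β ^ 2 = (((2 * ℓ + 1 : ℝ)) ^ 2 - 4 * q ^ 2 : ℝ)) :
    let a : ℂ := 1 / 2 + β / 2 + Complex.I * q
    let b : ℂ := 1 / 2 - β / 2 + Complex.I * q
    let ψ : ℝ → ℝ → ℂ := fun τ ρ =>
      ((1 + τ : ℝ) : ℂ) ^ (b - 1) * ((1 + ρ : ℝ) : ℂ) ^ (-a)
    ∀ τ ρ : ℝ, 0 < τ → 0 < ρ →
      ((ρ : ℂ) * ((ρ : ℂ) + 1)) * deriv (fun ρ' : ℝ => deriv (fun ρ'' : ℝ => ψ τ ρ'') ρ') ρ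
        + ((τ : ℂ) + 1) * deriv (fun τ' : ℝ => deriv (fun ρ' : ℝ => ψ τ' ρ') ρ) τ
        + ((2 + 2 * Complex.I * q) * (ρ : ℂ) + 1) * deriv (fun ρ' : ℝ => ψ τ ρ') ρ
        + (Complex.I * q - (ℓ : ℂ) * ((ℓ : ℂ) + 1)) * ψ τ ρ = 0 := by
  intro a b ψ τ ρ hτ hρ
  have ha : a = 1 / 2 + β / 2 + Complex.I * q := rfl
  have hb : b = 1 / 2 - β / 2 + Complex.I * q := rfl
  have hτ' : (0:ℝ) < 1 + τ := by linarith
  have hρ' : (0:ℝ) < 1 + ρ := by linarith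
  have hTne : ((1 + τ : ℝ) : ℂ) ≠ 0 := by
    simp only [ne_eq, Complex.ofReal_eq_zero]; linarith
  have hRne : ((1 + ρ : ℝ) : ℂ) ≠ 0 := by
    simp only [ne_eq, Complex.ofReal_eq_zero]; linarith
  -- first ρ-derivative at any point y > -1, any τ'
  have hd1 : ∀ (τ' : ℝ) {y : ℝ}, (0:ℝ) < 1 + y →
      HasDerivAt (fun ρ' : ℝ => ψ τ' ρ')
        (((1 + τ' : ℝ) : ℂ) ^ (b - 1) * ((-a) * ((1 + y : ℝ) : ℂ) ^ (-a - 1))) y := by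
    intro τ' y hy
    exact HasDerivAt.const_mul _ (aux17 (-a) hy)
  -- compute the pure first derivative
  have hD1 : deriv (fun ρ' : ℝ => ψ τ ρ') ρ
      = ((1 + τ : ℝ) : ℂ) ^ (b - 1) * ((-a) * ((1 + ρ : ℝ) : ℂ) ^ (-a - 1)) :=
    (hd1 τ hρ').deriv
  -- second ρ-derivative
  have hev : (fun ρ' : ℝ => deriv (fun ρ'' : ℝ => ψ τ ρ'') ρ')
      =ᶠ[nhds ρ] fun ρ' : ℝ =>
        ((1 + τ : ℝ) : ℂ) ^ (b - 1) * ((-a) * ((1 + ρ' : ℝ) : ℂ) ^ (-a - 1)) := by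
    filter_upwards [eventually_gt_nhds (show (-1:ℝ) < ρ by linarith)] with y hy
    exact (hd1 τ (by linarith)).deriv
  have hD2 : deriv (fun ρ' : ℝ => deriv (fun ρ'' : ℝ => ψ τ ρ'') ρ') ρ
      = ((1 + τ : ℝ) : ℂ) ^ (b - 1) * ((-a) *
          ((-a - 1) * ((1 + ρ : ℝ) : ℂ) ^ (-a - 1 - 1))) := by
    rw [hev.deriv_eq]
    exact (HasDerivAt.const_mul _ (HasDerivAt.const_mul _ (aux17 (-a - 1) hρ'))).deriv
  -- mixed derivative
  have hmixfun : (fun τ' : ℝ => deriv (fun ρ' : ℝ => ψ τ' ρ') ρ)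
      = fun τ' : ℝ => ((1 + τ' : ℝ) : ℂ) ^ (b - 1) * ((-a) * ((1 + ρ : ℝ) : ℂ) ^ (-a - 1)) := by
    funext τ'
    exact (hd1 τ' hρ').deriv
  have hDmix : deriv (fun τ' : ℝ => deriv (fun ρ' : ℝ => ψ τ' ρ') ρ) τ
      = ((b - 1) * ((1 + τ : ℝ) : ℂ) ^ (b - 1 - 1)) *
          ((-a) * ((1 + ρ : ℝ) : ℂ) ^ (-a - 1)) := by
    rw [hmixfun]
    exact ((aux17 (b - 1) hτ').mul_const _).deriv
  have hψ : ψ τ ρ = ((1 + τ : ℝ) : ℂ) ^ (b - 1) * ((1 + ρ : ℝ) : ℂ) ^ (-a) := rfl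
  rw [hD1, hD2, hDmix, hψ]
  -- rewrite powers to common atoms
  have eT : ((1 + τ : ℝ) : ℂ) ^ (b - 1)
      = ((1 + τ : ℝ) : ℂ) ^ (b - 1 - 1) * ((1 + τ : ℝ) : ℂ) := by
    rw [show (b - 1 : ℂ) = (b - 1 - 1) + 1 by ring, Complex.cpow_add _ _ hTne, Complex.cpow_one]
    ring_nf
  have eR0 : ((1 + ρ : ℝ) : ℂ) ^ (-a)
      = ((1 + ρ : ℝ) : ℂ) ^ (-a - 1 - 1) * (((1 + ρ : ℝ) : ℂ) * ((1 + ρ : ℝ) : ℂ)) := by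
    rw [show (-a : ℂ) = (-a - 1 - 1) + 1 + 1 by ring, Complex.cpow_add _ _ hRne,
      Complex.cpow_add _ _ hRne, Complex.cpow_one]
    ring_nf
  have eR1 : ((1 + ρ : ℝ) : ℂ) ^ (-a - 1)
      = ((1 + ρ : ℝ) : ℂ) ^ (-a - 1 - 1) * ((1 + ρ : ℝ) : ℂ) := by
    rw [show (-a - 1 : ℂ) = (-a - 1 - 1) + 1 by ring, Complex.cpow_add _ _ hRne,
      Complex.cpow_one]
    ring_nf
  rw [eR0, eR1, eT]
  -- algebraic identity
  have hsum : a + b = 1 + 2 * Complex.I * q := by rw [ha, hb]; ring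
  have hβ' : β ^ 2 = (2 * (ℓ:ℂ) + 1) ^ 2 - 4 * (q:ℂ) ^ 2 := by
    rw [hβ]; push_cast; ring
  have hab : a * b = Complex.I * q - (ℓ : ℂ) * ((ℓ : ℂ) + 1) := by
    rw [ha, hb]
    linear_combination (-(1:ℂ)/4) * hβ' + (q:ℂ)^2 * Complex.I_sq
  set X := ((1 + τ : ℝ) : ℂ) ^ (b - 1 - 1) with hX
  set Y := ((1 + ρ : ℝ) : ℂ) ^ (-a - 1 - 1) with hY
  push_cast
  linear_combination (-(X * Y * (1 + (τ:ℂ)) * (1 + (ρ:ℂ)) ^ 2)) * hab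
    + (X * Y * (1 + (τ:ℂ)) * (1 + (ρ:ℂ)) * a * (ρ:ℂ)) * hsum
end

section
/- Let q ∈ ℝ, ℓ ∈ ℕ with (2ℓ+1)² = 4q² (so β = 0), and a = 1/2 + iq. Then the function H(τ, ρ) = (τ+1)^{a-1}·(1+ρ)^{-a}·(log(ρ+1) + log(τ+1)) solves the PDE ρ(ρ+1)·∂²_ρH + (τ+1)·∂_τ∂_ρH + ((2+2iq)ρ + 1)·∂_ρH + (iq - ℓ(ℓ+1))·H = 0 on (0,∞) × (0,∞). -/
/-- Key derivative computation: `(y+1)^c * (b₁ log(y+1) + b₀)`. -/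
lemma mainDeriv (c b₀ b₁ : ℂ) {x : ℝ} (hx : 0 < x + 1) :
    HasDerivAt (fun y : ℝ => ((y : ℂ) + 1) ^ c * (b₁ * (Real.log (y + 1) : ℂ) + b₀))
      (((x : ℂ) + 1) ^ (c - 1) *
        (c * b₁ * (Real.log (x + 1) : ℂ) + c * b₀ + b₁)) x := by
  have hz0 : ((x : ℂ) + 1) ≠ 0 := by
    have : ((x + 1 : ℝ) : ℂ) ≠ 0 := Complex.ofReal_ne_zero.2 (by positivity)
    push_cast at this; exact this
  have hslit : ((x : ℂ) + 1) ∈ Complex.slitPlane := by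
    rw [Complex.mem_slitPlane_iff]
    left; simp; linarith
  have hb : HasDerivAt (fun y : ℝ => ((y : ℂ) + 1)) 1 x := by
    have h0 : HasDerivAt (fun y : ℝ => ((y + 1 : ℝ) : ℂ)) ((1 : ℝ) : ℂ) x :=
      ((hasDerivAt_id x).add_const 1).ofReal_comp
    have : (fun y : ℝ => ((y + 1 : ℝ) : ℂ)) = fun y : ℝ => ((y : ℂ) + 1) := by
      funext y; push_cast; ring
    rw [this] at h0; simpa using h0
  have hcp : HasDerivAt (fun y : ℝ => ((y : ℂ) + 1) ^ c)
      (c * ((x : ℂ) + 1) ^ (c - 1) * 1) x := by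
    simpa [Function.comp_def] using
      ((Complex.hasStrictDerivAt_cpow_const hslit).hasDerivAt.comp x hb)
  have hlog : HasDerivAt (fun y : ℝ => ((Real.log (y + 1) : ℝ) : ℂ))
      (((x + 1)⁻¹ : ℝ) : ℂ) x := by
    have h0 : HasDerivAt (fun y : ℝ => Real.log (y + 1)) ((x + 1)⁻¹) x := by
      simpa [Function.comp_def] using (Real.hasDerivAt_log (x := x + 1) (by linarith)).comp x ((hasDerivAt_id x).add_const 1)
    exact h0.ofReal_comp
  have hmul := hcp.mul ((hlog.const_mul b₁).add_const b₀)
  have hzz : ((x : ℂ) + 1) ^ c = ((x : ℂ) + 1) ^ (c - 1) * ((x : ℂ) + 1) := by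
    conv_lhs => rw [show c = c - 1 + 1 by ring]
    rw [Complex.cpow_add _ _ hz0, Complex.cpow_one]
  refine hmul.congr_deriv ?_; symm
  rw [hzz]
  have hinv : ((x : ℂ) + 1) * (((x + 1)⁻¹ : ℝ) : ℂ) = 1 := by
    push_cast
    field_simp
  linear_combination (-(((x : ℂ) + 1) ^ (c - 1)) * b₁) * hinv

/-- In the threshold case `(2ℓ+1)² = 4q²` (i.e. `β = 0`), with `a = 1/2 + iq`, the function
`H(τ,ρ) = (τ+1)^{a-1}(1+ρ)^{-a}(log(ρ+1) + log(τ+1))` solves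
`ρ(ρ+1)∂²_ρH + (τ+1)∂_τ∂_ρH + ((2+2iq)ρ+1)∂_ρH + (iq - ℓ(ℓ+1))H = 0` on `(0,∞)²`. -/
theorem stmt18 (q : ℝ) (ℓ : ℕ) (hβ : ((2 * ℓ + 1 : ℝ)) ^ 2 = 4 * q ^ 2) :
    let a : ℂ := 1 / 2 + Complex.I * q
    let H : ℝ → ℝ → ℂ := fun τ ρ =>
      ((τ + 1 : ℝ) : ℂ) ^ (a - 1) * ((1 + ρ : ℝ) : ℂ) ^ (-a)
        * ((Real.log (ρ + 1) : ℂ) + (Real.log (τ + 1) : ℂ))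
    ∀ τ ρ : ℝ, 0 < τ → 0 < ρ →
      ((ρ : ℂ) * ((ρ : ℂ) + 1)) * deriv (fun ρ' : ℝ => deriv (fun ρ'' : ℝ => H τ ρ'') ρ') ρ
        + ((τ : ℂ) + 1) * deriv (fun τ' : ℝ => deriv (fun ρ' : ℝ => H τ' ρ') ρ) τ
        + ((2 + 2 * Complex.I * q) * (ρ : ℂ) + 1) * deriv (fun ρ' : ℝ => H τ ρ') ρ
        + (Complex.I * q - (ℓ : ℂ) * ((ℓ : ℂ) + 1)) * H τ ρ = 0 := by
  intro a H τ ρ hτ hρ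
  have ha : a = 1 / 2 + Complex.I * q := rfl
  clear_value a
  -- the first ρ-derivative, for any parameter σ
  set Dρ : ℝ → ℝ → ℂ := fun σ x =>
    ((σ : ℂ) + 1) ^ (a - 1) * (((x : ℂ) + 1) ^ (-a - 1) *
      ((-a) * 1 * (Real.log (x + 1) : ℂ) + (-a) * (Real.log (σ + 1) : ℂ) + 1)) with hDρ
  have hA : ∀ (σ x : ℝ), 0 < x + 1 →
      HasDerivAt (fun ρ' : ℝ => H σ ρ') (Dρ σ x) x := by
    intro σ x hx
    have hfun : (fun ρ' : ℝ => H σ ρ') = fun ρ' : ℝ =>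
        ((σ : ℂ) + 1) ^ (a - 1) *
          (((ρ' : ℂ) + 1) ^ (-a) * (1 * (Real.log (ρ' + 1) : ℂ) + (Real.log (σ + 1) : ℂ))) := by
      funext u
      simp only [H]
      push_cast
      rw [add_comm (1 : ℂ) (u : ℂ)]
      ring
    rw [hfun, hDρ]
    have := (mainDeriv (-a) ((Real.log (σ + 1) : ℂ)) 1 hx).const_mul (((σ : ℂ) + 1) ^ (a - 1))
    convert this using 2
  -- second ρ-derivative
  have hB : HasDerivAt (fun x : ℝ => Dρ τ x)
      (((τ : ℂ) + 1) ^ (a - 1) * (((ρ : ℂ) + 1) ^ (-a - 1 - 1) *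
        ((-a - 1) * (-a) * (Real.log (ρ + 1) : ℂ)
          + (-a - 1) * ((-a) * (Real.log (τ + 1) : ℂ) + 1) + (-a)))) ρ := by
    have hfun : (fun x : ℝ => Dρ τ x) = fun x : ℝ =>
        ((τ : ℂ) + 1) ^ (a - 1) *
          (((x : ℂ) + 1) ^ (-a - 1) *
            ((-a) * (Real.log (x + 1) : ℂ) + ((-a) * (Real.log (τ + 1) : ℂ) + 1))) := by
      funext x; rw [hDρ]; ring
    rw [hfun]
    have := (mainDeriv (-a - 1) ((-a) * (Real.log (τ + 1) : ℂ) + 1) (-a)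
      (x := ρ) (by linarith)).const_mul (((τ : ℂ) + 1) ^ (a - 1))
    convert this using 2
  -- mixed derivative
  have hC : HasDerivAt (fun σ : ℝ => Dρ σ ρ)
      (((ρ : ℂ) + 1) ^ (-a - 1) * (((τ : ℂ) + 1) ^ (a - 1 - 1) *
        ((a - 1) * (-a) * (Real.log (τ + 1) : ℂ)
          + (a - 1) * ((-a) * (Real.log (ρ + 1) : ℂ) + 1) + (-a)))) τ := by
    have hfun : (fun σ : ℝ => Dρ σ ρ) = fun σ : ℝ =>
        ((ρ : ℂ) + 1) ^ (-a - 1) *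
          (((σ : ℂ) + 1) ^ (a - 1) *
            ((-a) * (Real.log (σ + 1) : ℂ) + ((-a) * (Real.log (ρ + 1) : ℂ) + 1))) := by
      funext σ; rw [hDρ]; ring
    rw [hfun]
    have := (mainDeriv (a - 1) ((-a) * (Real.log (ρ + 1) : ℂ) + 1) (-a)
      (x := τ) (by linarith)).const_mul (((ρ : ℂ) + 1) ^ (-a - 1))
    convert this using 2
  -- rewrite the three deriv expressions
  have hd1 : deriv (fun ρ' : ℝ => H τ ρ') ρ = Dρ τ ρ := (hA τ ρ (by linarith)).deriv
  have hd2 : deriv (fun ρ' : ℝ => deriv (fun ρ'' : ℝ => H τ ρ'') ρ') ρ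
      = ((τ : ℂ) + 1) ^ (a - 1) * (((ρ : ℂ) + 1) ^ (-a - 1 - 1) *
        ((-a - 1) * (-a) * (Real.log (ρ + 1) : ℂ)
          + (-a - 1) * ((-a) * (Real.log (τ + 1) : ℂ) + 1) + (-a))) := by
    have hev : (fun ρ' : ℝ => deriv (fun ρ'' : ℝ => H τ ρ'') ρ')
        =ᶠ[nhds ρ] fun ρ' : ℝ => Dρ τ ρ' := by
      filter_upwards [eventually_gt_nhds (show (-1 : ℝ) < ρ by linarith)] with x hx
      exact (hA τ x (by linarith)).deriv
    rw [hev.deriv_eq]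
    exact hB.deriv
  have hd3 : deriv (fun τ' : ℝ => deriv (fun ρ' : ℝ => H τ' ρ') ρ) τ
      = ((ρ : ℂ) + 1) ^ (-a - 1) * (((τ : ℂ) + 1) ^ (a - 1 - 1) *
        ((a - 1) * (-a) * (Real.log (τ + 1) : ℂ)
          + (a - 1) * ((-a) * (Real.log (ρ + 1) : ℂ) + 1) + (-a))) := by
    have hev : (fun τ' : ℝ => deriv (fun ρ' : ℝ => H τ' ρ') ρ)
        =ᶠ[nhds τ] fun τ' : ℝ => Dρ τ' ρ := by
      filter_upwards [eventually_gt_nhds (show (-1 : ℝ) < τ by linarith)] with σ hσ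
      exact (hA σ ρ (by linarith)).deriv
    rw [hev.deriv_eq]
    exact hC.deriv
  rw [hd1, hd2, hd3, hDρ]
  simp only [H]
  -- algebraic identities
  have hzρ : ((ρ : ℂ) + 1) ≠ 0 := by
    have : ((ρ + 1 : ℝ) : ℂ) ≠ 0 := Complex.ofReal_ne_zero.2 (by positivity)
    push_cast at this; exact this
  have hzτ : ((τ : ℂ) + 1) ≠ 0 := by
    have : ((τ + 1 : ℝ) : ℂ) ≠ 0 := Complex.ofReal_ne_zero.2 (by positivity)
    push_cast at this; exact this
  have e0 : ((ρ : ℂ) + 1) ^ (-a) = ((ρ : ℂ) + 1) ^ (-a - 1 - 1) * (((ρ : ℂ) + 1) * ((ρ : ℂ) + 1)) := by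
    conv_lhs => rw [show (-a) = (-a - 1 - 1) + 1 + 1 by ring]
    rw [Complex.cpow_add _ _ hzρ, Complex.cpow_add _ _ hzρ, Complex.cpow_one]
    ring
  have e1 : ((ρ : ℂ) + 1) ^ (-a - 1) = ((ρ : ℂ) + 1) ^ (-a - 1 - 1) * ((ρ : ℂ) + 1) := by
    conv_lhs => rw [show (-a - 1) = (-a - 1 - 1) + 1 by ring]
    rw [Complex.cpow_add _ _ hzρ, Complex.cpow_one]
  have e3 : ((τ : ℂ) + 1) ^ (a - 1) = ((τ : ℂ) + 1) ^ (a - 1 - 1) * ((τ : ℂ) + 1) := by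
    conv_lhs => rw [show (a - 1) = (a - 1 - 1) + 1 by ring]
    rw [Complex.cpow_add _ _ hzτ, Complex.cpow_one]
  have hl : (ℓ : ℂ) * ((ℓ : ℂ) + 1) = (q : ℂ) ^ 2 - 1 / 4 := by
    have hr : (ℓ : ℝ) * ((ℓ : ℝ) + 1) = q ^ 2 - 1 / 4 := by nlinarith [hβ]
    have := congrArg (fun t : ℝ => (t : ℂ)) hr
    push_cast at this
    exact this
  have h1 : (2 : ℂ) + 2 * Complex.I * (q : ℂ) = 2 * a + 1 := by rw [ha]; ring
  have h2 : Complex.I * (q : ℂ) - (ℓ : ℂ) * ((ℓ : ℂ) + 1) = a ^ 2 := by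
    rw [ha]; linear_combination (-(q : ℂ) ^ 2) * Complex.I_sq - hl
  push_cast
  rw [add_comm (1 : ℂ) (ρ : ℂ), e0, e1, e3, h1, h2]
  ring
end
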